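/- arXiv:2110.14248 — 2 statements merged into one kernel-verified Lean document; each statement's English description precedes it below -/
import Mathlib

section
/- Let D_TV denote total variation and consider a Markov chain framework: for two policies π, π' on a goal-conditioned MDP with finite state space, if max_{s,g} D_TV(π(·|s,g), π'(·|s,g)) ≤ ε, then the discounted joint occupancy measures satisfy D_TV(ρ^π(s,g), ρ^{π'}(s,g)) ≤ γε/(1−γ), where ρ^π(s|g) = (1−γ)Σ_{t≥0} γ^t p_π(s_t=s|g) and ρ^π(s,g) = ρ(g)ρ^π(s|g) for a fixed goal distribution ρ(g). -/
open Finset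

/-- Time-`t` state marginal under a stationary policy `π` in a finite MDP. -/
def marg {S A : Type*} [Fintype S] [Fintype A]
    (p : S → A → S → ℝ) (ρ0 : S → ℝ) (π : S → A → ℝ) : ℕ → S → ℝ
  | 0 => ρ0
  | (t + 1) => fun s' => ∑ s, ∑ a, marg p ρ0 π t s * π s a * p s a s'

/-- Discounted state occupancy `ρ^π(s|g) = (1-γ) Σ_t γ^t p_π(s_t = s|g)`. -/
noncomputable def pDelta {S A : Type*} [Fintype S] [Fintype A]
    (γ : ℝ) (p : S → A → S → ℝ) (ρ0 : S → ℝ) (π : S → A → ℝ) (s : S) : ℝ :=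
  (1 - γ) * ∑' t : ℕ, γ ^ t * marg p ρ0 π t s

/-- Total variation distance between two finitely supported distributions. -/
noncomputable def dtv {A : Type*} [Fintype A] (μ ν : A → ℝ) : ℝ :=
  (1 / 2) * ∑ a, |μ a - ν a|

section aux
variable {S A : Type*} [Fintype S] [Fintype A]
  (p : S → A → S → ℝ) (ρ0 : S → ℝ)

lemma marg_nonneg (π : S → A → ℝ)
    (hp : ∀ s a s', 0 ≤ p s a s') (hρ : ∀ s, 0 ≤ ρ0 s) (hπ : ∀ s a, 0 ≤ π s a) :
    ∀ t s, 0 ≤ marg p ρ0 π t s := by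
  intro t
  induction t with
  | zero => exact hρ
  | succ t ih =>
    intro s'
    exact Finset.sum_nonneg fun s _ => Finset.sum_nonneg fun a _ =>
      mul_nonneg (mul_nonneg (ih s) (hπ s a)) (hp s a s')

lemma marg_sum_one (π : S → A → ℝ)
    (hps : ∀ s a, ∑ s', p s a s' = 1) (hρs : ∑ s, ρ0 s = 1) (hπs : ∀ s, ∑ a, π s a = 1) :
    ∀ t, ∑ s, marg p ρ0 π t s = 1 := by
  intro t
  induction t with
  | zero => exact hρs
  | succ t ih =>
    show ∑ s', ∑ s, ∑ a, marg p ρ0 π t s * π s a * p s a s' = 1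
    rw [Finset.sum_comm]
    calc ∑ s, ∑ s', ∑ a, marg p ρ0 π t s * π s a * p s a s'
        = ∑ s, marg p ρ0 π t s := by
          refine Finset.sum_congr rfl fun s _ => ?_
          rw [Finset.sum_comm]
          have : ∀ a ∈ Finset.univ, ∑ s', marg p ρ0 π t s * π s a * p s a s'
              = marg p ρ0 π t s * π s a := fun a _ => by
            rw [← Finset.mul_sum, hps, mul_one]
          rw [Finset.sum_congr rfl this, ← Finset.mul_sum, hπs, mul_one]
      _ = 1 := ih

lemma step_bound (π₁ π₂ : S → A → ℝ)
    (hp : ∀ s a s', 0 ≤ p s a s') (hps : ∀ s a, ∑ s', p s a s' = 1)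
    (hρ : ∀ s, 0 ≤ ρ0 s) (hρs : ∑ s, ρ0 s = 1)
    (hπ₁ : ∀ s a, 0 ≤ π₁ s a) (hπ₁s : ∀ s, ∑ a, π₁ s a = 1)
    (hπ₂ : ∀ s a, 0 ≤ π₂ s a) (hπ₂s : ∀ s, ∑ a, π₂ s a = 1)
    (ε : ℝ) (hε : ∀ s, (1/2) * ∑ a, |π₁ s a - π₂ s a| ≤ ε) (t : ℕ) :
    (1/2) * ∑ s', |marg p ρ0 π₁ (t+1) s' - marg p ρ0 π₂ (t+1) s'| ≤
    (1/2) * ∑ s, |marg p ρ0 π₁ t s - marg p ρ0 π₂ t s| + ε := by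
  set m := marg p ρ0 π₁ t with hm
  set n := marg p ρ0 π₂ t with hn
  have hns : ∑ s, n s = 1 := marg_sum_one p ρ0 π₂ hps hρs hπ₂s t
  have hnn : ∀ s, 0 ≤ n s := marg_nonneg p ρ0 π₂ hp hρ hπ₂ t
  have key : ∀ s', |marg p ρ0 π₁ (t+1) s' - marg p ρ0 π₂ (t+1) s'| ≤
      ∑ s, ∑ a, (|m s - n s| * π₁ s a + n s * |π₁ s a - π₂ s a|) * p s a s' := by
    intro s'
    have e1 : marg p ρ0 π₁ (t+1) s' - marg p ρ0 π₂ (t+1) s'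
        = ∑ s, ∑ a, ((m s - n s) * π₁ s a + n s * (π₁ s a - π₂ s a)) * p s a s' := by
      show (∑ s, ∑ a, m s * π₁ s a * p s a s') - (∑ s, ∑ a, n s * π₂ s a * p s a s') = _
      rw [← Finset.sum_sub_distrib]
      refine Finset.sum_congr rfl fun s _ => ?_
      rw [← Finset.sum_sub_distrib]
      refine Finset.sum_congr rfl fun a _ => ?_
      ring
    rw [e1]
    refine (Finset.abs_sum_le_sum_abs _ _).trans (Finset.sum_le_sum fun s _ => ?_)
    refine (Finset.abs_sum_le_sum_abs _ _).trans (Finset.sum_le_sum fun a _ => ?_)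
    rw [abs_mul, abs_of_nonneg (hp s a s')]
    refine mul_le_mul_of_nonneg_right ?_ (hp s a s')
    refine (abs_add_le _ _).trans ?_
    rw [abs_mul, abs_mul, abs_of_nonneg (hπ₁ s a), abs_of_nonneg (hnn s)]
  calc (1/2) * ∑ s', |marg p ρ0 π₁ (t+1) s' - marg p ρ0 π₂ (t+1) s'|
      ≤ (1/2) * ∑ s', ∑ s, ∑ a, (|m s - n s| * π₁ s a + n s * |π₁ s a - π₂ s a|) * p s a s' :=
        mul_le_mul_of_nonneg_left (Finset.sum_le_sum fun s' _ => key s') (by norm_num)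
    _ = (1/2) * ∑ s, ∑ a, (|m s - n s| * π₁ s a + n s * |π₁ s a - π₂ s a|) := by
        rw [Finset.sum_comm]
        congr 1
        refine Finset.sum_congr rfl fun s _ => ?_
        rw [Finset.sum_comm]
        refine Finset.sum_congr rfl fun a _ => ?_
        rw [← Finset.mul_sum, hps, mul_one]
    _ = (1/2) * ∑ s, |m s - n s| + ∑ s, n s * ((1/2) * ∑ a, |π₁ s a - π₂ s a|) := by
        rw [Finset.sum_congr rfl (fun s (_ : s ∈ Finset.univ) => Finset.sum_add_distrib),
          Finset.sum_add_distrib, mul_add]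
        congr 1
        · congr 1
          refine Finset.sum_congr rfl fun s _ => ?_
          rw [← Finset.mul_sum, hπ₁s, mul_one]
        · rw [Finset.mul_sum]
          refine Finset.sum_congr rfl fun s _ => ?_
          rw [← Finset.mul_sum]
          ring
    _ ≤ (1/2) * ∑ s, |m s - n s| + ∑ s, n s * ε := by
        gcongr with s _
        · exact hnn s
        · exact hε s
    _ = (1/2) * ∑ s, |m s - n s| + ε := by rw [← Finset.sum_mul, hns, one_mul]

lemma dist_bound (π₁ π₂ : S → A → ℝ)
    (hp : ∀ s a s', 0 ≤ p s a s') (hps : ∀ s a, ∑ s', p s a s' = 1)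
    (hρ : ∀ s, 0 ≤ ρ0 s) (hρs : ∑ s, ρ0 s = 1)
    (hπ₁ : ∀ s a, 0 ≤ π₁ s a) (hπ₁s : ∀ s, ∑ a, π₁ s a = 1)
    (hπ₂ : ∀ s a, 0 ≤ π₂ s a) (hπ₂s : ∀ s, ∑ a, π₂ s a = 1)
    (ε : ℝ) (hε : ∀ s, (1/2) * ∑ a, |π₁ s a - π₂ s a| ≤ ε) (t : ℕ) :
    (1/2) * ∑ s, |marg p ρ0 π₁ t s - marg p ρ0 π₂ t s| ≤ t * ε := by
  induction t with
  | zero => simp [marg]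
  | succ t ih =>
    have := step_bound p ρ0 π₁ π₂ hp hps hρ hρs hπ₁ hπ₁s hπ₂ hπ₂s ε hε t
    push_cast
    linarith

end aux

section aux2
variable {S A : Type*} [Fintype S] [Fintype A]

lemma pdelta_tv (γ : ℝ) (hγ : 0 ≤ γ) (hγ1 : γ < 1)
    (p : S → A → S → ℝ) (ρ0 : S → ℝ)
    (hp : ∀ s a s', 0 ≤ p s a s') (hps : ∀ s a, ∑ s', p s a s' = 1)
    (hρ : ∀ s, 0 ≤ ρ0 s) (hρs : ∑ s, ρ0 s = 1)
    (π₁ π₂ : S → A → ℝ)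
    (hπ₁ : ∀ s a, 0 ≤ π₁ s a) (hπ₁s : ∀ s, ∑ a, π₁ s a = 1)
    (hπ₂ : ∀ s a, 0 ≤ π₂ s a) (hπ₂s : ∀ s, ∑ a, π₂ s a = 1)
    (ε : ℝ) (hε0 : 0 ≤ ε) (hε : ∀ s, (1/2) * ∑ a, |π₁ s a - π₂ s a| ≤ ε) :
    (1/2) * ∑ s, |pDelta γ p ρ0 π₁ s - pDelta γ p ρ0 π₂ s| ≤ γ * ε / (1 - γ) := by
  set m := marg p ρ0 π₁ with hmdef
  set n := marg p ρ0 π₂ with hndef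
  have hγ' : (0:ℝ) < 1 - γ := by linarith
  have habs : |γ| < 1 := by rw [abs_of_nonneg hγ]; exact hγ1
  have hgeo : Summable fun t : ℕ => γ ^ t := summable_geometric_of_lt_one hγ hγ1
  have htg : Summable fun t : ℕ => (t : ℝ) * γ ^ t := by
    simpa using summable_pow_mul_geometric_of_norm_lt_one 1 (by rwa [Real.norm_eq_abs])
  -- bounds on marginals
  have hm01 : ∀ t s, 0 ≤ m t s ∧ m t s ≤ 1 := by
    intro t s
    refine ⟨marg_nonneg p ρ0 π₁ hp hρ hπ₁ t s, ?_⟩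
    calc m t s ≤ ∑ s', m t s' :=
          Finset.single_le_sum (fun s' _ => marg_nonneg p ρ0 π₁ hp hρ hπ₁ t s')
            (Finset.mem_univ s)
      _ = 1 := marg_sum_one p ρ0 π₁ hps hρs hπ₁s t
  have hn01 : ∀ t s, 0 ≤ n t s ∧ n t s ≤ 1 := by
    intro t s
    refine ⟨marg_nonneg p ρ0 π₂ hp hρ hπ₂ t s, ?_⟩
    calc n t s ≤ ∑ s', n t s' :=
          Finset.single_le_sum (fun s' _ => marg_nonneg p ρ0 π₂ hp hρ hπ₂ t s')
            (Finset.mem_univ s)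
      _ = 1 := marg_sum_one p ρ0 π₂ hps hρs hπ₂s t
  have hsum1 : ∀ s, Summable fun t => γ ^ t * m t s := fun s =>
    Summable.of_nonneg_of_le (fun t => mul_nonneg (pow_nonneg hγ t) (hm01 t s).1)
      (fun t => by
        calc γ ^ t * m t s ≤ γ ^ t * 1 :=
              mul_le_mul_of_nonneg_left (hm01 t s).2 (pow_nonneg hγ t)
          _ = γ ^ t := mul_one _) hgeo
  have hsum2 : ∀ s, Summable fun t => γ ^ t * n t s := fun s =>
    Summable.of_nonneg_of_le (fun t => mul_nonneg (pow_nonneg hγ t) (hn01 t s).1)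
      (fun t => by
        calc γ ^ t * n t s ≤ γ ^ t * 1 :=
              mul_le_mul_of_nonneg_left (hn01 t s).2 (pow_nonneg hγ t)
          _ = γ ^ t := mul_one _) hgeo
  have hsumh : ∀ s, Summable fun t => γ ^ t * |m t s - n t s| := by
    intro s
    refine Summable.of_nonneg_of_le
      (fun t => mul_nonneg (pow_nonneg hγ t) (abs_nonneg _))
      (fun t => ?_) (hgeo.mul_left 2)
    have : |m t s - n t s| ≤ 2 := by
      have := hm01 t s; have := hn01 t s
      rw [abs_sub_le_iff]; constructor <;> linarith [(hm01 t s).1, (hm01 t s).2,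
        (hn01 t s).1, (hn01 t s).2]
    calc γ ^ t * |m t s - n t s| ≤ γ ^ t * 2 :=
          mul_le_mul_of_nonneg_left this (pow_nonneg hγ t)
      _ = 2 * γ ^ t := by ring
  -- pointwise bound
  have hpt : ∀ s, |pDelta γ p ρ0 π₁ s - pDelta γ p ρ0 π₂ s|
      ≤ (1 - γ) * ∑' t, γ ^ t * |m t s - n t s| := by
    intro s
    have e1 : pDelta γ p ρ0 π₁ s - pDelta γ p ρ0 π₂ s
        = (1 - γ) * ∑' t, (γ ^ t * m t s - γ ^ t * n t s) := by
      rw [pDelta, pDelta, Summable.tsum_sub (hsum1 s) (hsum2 s), mul_sub]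
    rw [e1, abs_mul, abs_of_nonneg hγ'.le]
    refine mul_le_mul_of_nonneg_left ?_ hγ'.le
    have := norm_tsum_le_tsum_norm (f := fun t => γ ^ t * m t s - γ ^ t * n t s) ?_
    · rw [Real.norm_eq_abs] at this
      refine this.trans (le_of_eq (tsum_congr fun t => ?_))
      show ‖γ ^ t * m t s - γ ^ t * n t s‖ = γ ^ t * |m t s - n t s|
      rw [Real.norm_eq_abs, ← mul_sub, abs_mul, abs_of_nonneg (pow_nonneg hγ t)]
    · refine (hsumh s).congr fun t => ?_
      show γ ^ t * |m t s - n t s| = ‖γ ^ t * m t s - γ ^ t * n t s‖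
      rw [Real.norm_eq_abs, ← mul_sub, abs_mul, abs_of_nonneg (pow_nonneg hγ t)]
  calc (1/2) * ∑ s, |pDelta γ p ρ0 π₁ s - pDelta γ p ρ0 π₂ s|
      ≤ (1/2) * ∑ s, (1 - γ) * ∑' t, γ ^ t * |m t s - n t s| :=
        mul_le_mul_of_nonneg_left (Finset.sum_le_sum fun s _ => hpt s) (by norm_num)
    _ = (1/2) * (1 - γ) * ∑' t, ∑ s, γ ^ t * |m t s - n t s| := by
        rw [Summable.tsum_finsetSum fun s _ => hsumh s, ← Finset.mul_sum, ← mul_assoc]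
    _ ≤ (1/2) * (1 - γ) * ∑' t : ℕ, γ ^ t * (2 * t * ε) := by
        refine mul_le_mul_of_nonneg_left (Summable.tsum_le_tsum (fun t => ?_) ?_ ?_) (by positivity)
        · rw [← Finset.mul_sum]
          refine mul_le_mul_of_nonneg_left ?_ (pow_nonneg hγ t)
          have := dist_bound p ρ0 π₁ π₂ hp hps hρ hρs hπ₁ hπ₁s hπ₂ hπ₂s ε hε t
          linarith
        · exact summable_sum fun s _ => hsumh s
        · exact (htg.mul_left (2 * ε)).congr fun t => by ring
    _ = (1 - γ) * ε * ∑' t : ℕ, (t : ℝ) * γ ^ t := by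
        have he : ∀ t : ℕ, γ ^ t * (2 * t * ε) = ((t : ℝ) * γ ^ t) * (2 * ε) := fun t => by
          ring
        rw [tsum_congr he, tsum_mul_right]
        ring
    _ = (1 - γ) * ε * (γ / (1 - γ) ^ 2) := by
        rw [tsum_coe_mul_geometric_of_norm_lt_one (by rwa [Real.norm_eq_abs])]
    _ = γ * ε / (1 - γ) := by
        field_simp
end aux2

/-- if the two policies are everywhere within `ε` in total variation, then their
discounted joint (state, goal) occupancy measures are within `γε/(1-γ)` in total variation. -/
theorem occupancy_tv_perturbation {S A Gt : Type*} [Fintype S] [Fintype A] [Fintype Gt]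
    (γ : ℝ) (hγ : 0 ≤ γ) (hγ1 : γ < 1)
    (p : S → A → S → ℝ) (ρ0 : S → ℝ) (ρG : Gt → ℝ)
    (hp_nonneg : ∀ s a s', 0 ≤ p s a s') (hp_sum : ∀ s a, ∑ s', p s a s' = 1)
    (hρ0_nonneg : ∀ s, 0 ≤ ρ0 s) (hρ0_sum : ∑ s, ρ0 s = 1)
    (hρG_nonneg : ∀ g, 0 ≤ ρG g) (hρG_sum : ∑ g, ρG g = 1)
    (π π' : S → Gt → A → ℝ)
    (hπ_nonneg : ∀ s g a, 0 ≤ π s g a) (hπ_sum : ∀ s g, ∑ a, π s g a = 1)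
    (hπ'_nonneg : ∀ s g a, 0 ≤ π' s g a) (hπ'_sum : ∀ s g, ∑ a, π' s g a = 1)
    (ε : ℝ)
    (hε : ∀ s g, dtv (fun a => π s g a) (fun a => π' s g a) ≤ ε) :
    (1 / 2) * ∑ s, ∑ g,
        |ρG g * pDelta γ p ρ0 (fun s' a => π s' g a) s -
          ρG g * pDelta γ p ρ0 (fun s' a => π' s' g a) s| ≤
      γ * ε / (1 - γ) := by
  have hS : Nonempty S := by
    by_contra h
    rw [not_nonempty_iff] at h
    rw [Finset.univ_eq_empty, Finset.sum_empty] at hρ0_sum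
    norm_num at hρ0_sum
  have hG : Nonempty Gt := by
    by_contra h
    rw [not_nonempty_iff] at h
    rw [Finset.univ_eq_empty, Finset.sum_empty] at hρG_sum
    norm_num at hρG_sum
  obtain ⟨s0⟩ := hS
  obtain ⟨g0⟩ := hG
  have hε0 : 0 ≤ ε := by
    refine le_trans ?_ (hε s0 g0)
    unfold dtv
    positivity
  have key : ∀ g : Gt, (1/2) * ∑ s, |pDelta γ p ρ0 (fun s' a => π s' g a) s -
      pDelta γ p ρ0 (fun s' a => π' s' g a) s| ≤ γ * ε / (1 - γ) := fun g =>
    pdelta_tv γ hγ hγ1 p ρ0 hp_nonneg hp_sum hρ0_nonneg hρ0_sum _ _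
      (fun s a => hπ_nonneg s g a) (fun s => hπ_sum s g)
      (fun s a => hπ'_nonneg s g a) (fun s => hπ'_sum s g) ε hε0 (fun s => hε s g)
  calc (1 / 2) * ∑ s, ∑ g,
        |ρG g * pDelta γ p ρ0 (fun s' a => π s' g a) s -
          ρG g * pDelta γ p ρ0 (fun s' a => π' s' g a) s|
      = ∑ g, ρG g * ((1/2) * ∑ s, |pDelta γ p ρ0 (fun s' a => π s' g a) s -
          pDelta γ p ρ0 (fun s' a => π' s' g a) s|) := by
        rw [Finset.sum_comm, Finset.mul_sum]
        refine Finset.sum_congr rfl fun g _ => ?_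
        rw [Finset.mul_sum, Finset.mul_sum, Finset.mul_sum]
        refine Finset.sum_congr rfl fun s _ => ?_
        rw [← mul_sub, abs_mul, abs_of_nonneg (hρG_nonneg g)]
        ring
    _ ≤ ∑ g, ρG g * (γ * ε / (1 - γ)) :=
        Finset.sum_le_sum fun g _ =>
          mul_le_mul_of_nonneg_left (key g) (hρG_nonneg g)
    _ = γ * ε / (1 - γ) := by rw [← Finset.sum_mul, hρG_sum, one_mul]
end

section
/- Domain generalization bound: Let Π be a policy class, {ρ^{e_i}}_{i=1}^N source joint distributions and ρ^t a target distribution. For unit-sum weights α define λ_α = min_{π'∈Π}[Σᵢ αᵢ ε^{e_i}(π'‖π_G) + ε^t(π'‖π_G)], and let ρ̃ be any element of the characteristic set B(δ_E, E|Π) minimizing d_{ΠΔΠ}(·, ρ^t). Then for every π ∈ Π and unit-sum α: ε^t(π‖π_G) ≤ Σᵢ αᵢ ε^{e_i}(π‖π_G) + λ_α + δ_E + d_{ΠΔΠ}(ρ̃, ρ^t), where δ_E = max_{i,j} d_{ΠΔΠ}(ρ^{e_i}, ρ^{e_j}). -/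
open MeasureTheory

noncomputable def tvDist {A : Type*} [MeasurableSpace A] (μ ν : Measure A) : ℝ :=
  ⨆ s : {s : Set A // MeasurableSet s}, |(μ (s : Set A)).toReal - (ν (s : Set A)).toReal|

noncomputable def avgTV {X G A : Type*} [MeasurableSpace X] [MeasurableSpace G]
    [MeasurableSpace A] (ρ : Measure (X × G)) (π₁ π₂ : X → G → Measure A) : ℝ :=
  ∫ p, tvDist (π₁ p.1 p.2) (π₂ p.1 p.2) ∂ρ

noncomputable def dPiDeltaPi {X G A : Type*} [MeasurableSpace X] [MeasurableSpace G]
    [MeasurableSpace A] (Pol : Set (X → G → Measure A)) (ρ ρ' : Measure (X × G)) : ℝ :=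
  ⨆ pp : Pol × Pol, |avgTV ρ pp.1.1 pp.2.1 - avgTV ρ' pp.1.1 pp.2.1|

/-!
For each source `ρ^{e_i}`, routing through `π*` gives the single-source bound
`ε^t(π‖π_G) ≤ ε^{e_i}(π‖π_G) + d(ρ^{e_i}, ρ^t) + ε^{e_i}(π*‖π_G) + ε^t(π*‖π_G)`.
The triangle inequality for `d = d_{ΠΔΠ}` through `ρ̃ ∈ B(δ_E, E|Π)` bounds `d(ρ^{e_i}, ρ^t)` by
`δ_E + d(ρ̃, ρ^t)`, and averaging with the weights `α` collects the `π*` terms into `λ_α`.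
-/

section TotalVariation

variable {A : Type*} [MeasurableSpace A]

lemma tvDist_nonneg (μ ν : Measure A) : 0 ≤ tvDist μ ν :=
  Real.iSup_nonneg fun _ => abs_nonneg _

lemma tvDist_comm (μ ν : Measure A) : tvDist μ ν = tvDist ν μ :=
  iSup_congr fun _ => abs_sub_comm _ _

lemma abs_toReal_sub_le_tvDist (μ ν : Measure A) [IsFiniteMeasure μ] [IsFiniteMeasure ν]
    {s : Set A} (hs : MeasurableSet s) : |(μ s).toReal - (ν s).toReal| ≤ tvDist μ ν := by
  refine le_ciSup (f := fun t : {s : Set A // MeasurableSet s} => |(μ t).toReal - (ν t).toReal|)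
    ⟨max (μ.real Set.univ) (ν.real Set.univ), ?_⟩ ⟨s, hs⟩
  rintro _ ⟨t, rfl⟩
  exact abs_sub_le_of_nonneg_of_le measureReal_nonneg
    (le_max_of_le_left (measureReal_mono (Set.subset_univ _))) measureReal_nonneg
    (le_max_of_le_right (measureReal_mono (Set.subset_univ _)))

lemma tvDist_le_one (μ ν : Measure A) [IsProbabilityMeasure μ] [IsProbabilityMeasure ν] :
    tvDist μ ν ≤ 1 :=
  Real.iSup_le (fun _ => abs_sub_le_of_nonneg_of_le measureReal_nonneg measureReal_le_one
    measureReal_nonneg measureReal_le_one) zero_le_one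

lemma tvDist_triangle (μ ν κ : Measure A)
    [IsFiniteMeasure μ] [IsFiniteMeasure ν] [IsFiniteMeasure κ] :
    tvDist μ κ ≤ tvDist μ ν + tvDist ν κ := by
  refine Real.iSup_le (fun ⟨s, hs⟩ => ?_) (add_nonneg (tvDist_nonneg _ _) (tvDist_nonneg _ _))
  calc |(μ s).toReal - (κ s).toReal|
      ≤ |(μ s).toReal - (ν s).toReal| + |(ν s).toReal - (κ s).toReal| := abs_sub_le _ _ _
    _ ≤ tvDist μ ν + tvDist ν κ :=
      add_le_add (abs_toReal_sub_le_tvDist μ ν hs) (abs_toReal_sub_le_tvDist ν κ hs)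

end TotalVariation

section PolicyDivergence

variable {X G A : Type*} [MeasurableSpace X] [MeasurableSpace G] [MeasurableSpace A]

lemma avgTV_nonneg (ρ : Measure (X × G)) (π₁ π₂ : X → G → Measure A) :
    0 ≤ avgTV ρ π₁ π₂ :=
  integral_nonneg fun _ => tvDist_nonneg _ _

lemma avgTV_comm (ρ : Measure (X × G)) (π₁ π₂ : X → G → Measure A) :
    avgTV ρ π₁ π₂ = avgTV ρ π₂ π₁ := by
  simp only [avgTV, tvDist_comm (π₁ _ _)]

lemma avgTV_le_one (ρ : Measure (X × G)) [IsProbabilityMeasure ρ] {π₁ π₂ : X → G → Measure A}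
    (h₁ : ∀ x g, IsProbabilityMeasure (π₁ x g)) (h₂ : ∀ x g, IsProbabilityMeasure (π₂ x g)) :
    avgTV ρ π₁ π₂ ≤ 1 := by
  have hle : ∀ p : X × G, tvDist (π₁ p.1 p.2) (π₂ p.1 p.2) ≤ 1 := fun p => by
    have := h₁ p.1 p.2; have := h₂ p.1 p.2
    exact tvDist_le_one _ _
  simpa [avgTV] using integral_mono_of_nonneg (ae_of_all _ fun _ => tvDist_nonneg _ _)
    (integrable_const (μ := ρ) (1 : ℝ)) (ae_of_all _ hle)

lemma avgTV_triangle (ρ : Measure (X × G)) {π₁ π₂ π₃ : X → G → Measure A}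
    (h₁ : ∀ x g, IsFiniteMeasure (π₁ x g)) (h₂ : ∀ x g, IsFiniteMeasure (π₂ x g))
    (h₃ : ∀ x g, IsFiniteMeasure (π₃ x g))
    (I₁₃ : Integrable (fun p : X × G => tvDist (π₁ p.1 p.2) (π₃ p.1 p.2)) ρ)
    (I₁₂ : Integrable (fun p : X × G => tvDist (π₁ p.1 p.2) (π₂ p.1 p.2)) ρ)
    (I₂₃ : Integrable (fun p : X × G => tvDist (π₂ p.1 p.2) (π₃ p.1 p.2)) ρ) :
    avgTV ρ π₁ π₃ ≤ avgTV ρ π₁ π₂ + avgTV ρ π₂ π₃ := by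
  rw [avgTV, avgTV, avgTV, ← integral_add I₁₂ I₂₃]
  refine integral_mono I₁₃ (I₁₂.add I₂₃) fun p => ?_
  have := h₁ p.1 p.2; have := h₂ p.1 p.2; have := h₃ p.1 p.2
  exact tvDist_triangle _ _ _

variable {Pol : Set (X → G → Measure A)}

lemma dPiDeltaPi_nonneg (ρ ρ' : Measure (X × G)) : 0 ≤ dPiDeltaPi Pol ρ ρ' :=
  Real.iSup_nonneg fun _ => abs_nonneg _

lemma dPiDeltaPi_comm (ρ ρ' : Measure (X × G)) : dPiDeltaPi Pol ρ ρ' = dPiDeltaPi Pol ρ' ρ :=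
  iSup_congr fun _ => abs_sub_comm _ _

lemma abs_avgTV_sub_le_dPiDeltaPi (hPol : ∀ π ∈ Pol, ∀ x g, IsProbabilityMeasure (π x g))
    (ρ ρ' : Measure (X × G)) [IsProbabilityMeasure ρ] [IsProbabilityMeasure ρ']
    {π₁ π₂ : X → G → Measure A} (h₁ : π₁ ∈ Pol) (h₂ : π₂ ∈ Pol) :
    |avgTV ρ π₁ π₂ - avgTV ρ' π₁ π₂| ≤ dPiDeltaPi Pol ρ ρ' := by
  refine le_ciSup (f := fun pp : Pol × Pol => |avgTV ρ pp.1.1 pp.2.1 - avgTV ρ' pp.1.1 pp.2.1|)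
    ⟨1, ?_⟩ ⟨⟨π₁, h₁⟩, ⟨π₂, h₂⟩⟩
  rintro _ ⟨⟨⟨σ₁, hσ₁⟩, ⟨σ₂, hσ₂⟩⟩, rfl⟩
  exact abs_sub_le_of_nonneg_of_le (avgTV_nonneg ρ σ₁ σ₂)
    (avgTV_le_one ρ (hPol σ₁ hσ₁) (hPol σ₂ hσ₂)) (avgTV_nonneg ρ' σ₁ σ₂)
    (avgTV_le_one ρ' (hPol σ₁ hσ₁) (hPol σ₂ hσ₂))

lemma dPiDeltaPi_triangle (hPol : ∀ π ∈ Pol, ∀ x g, IsProbabilityMeasure (π x g))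
    (ρ ρ' ρ'' : Measure (X × G))
    [IsProbabilityMeasure ρ] [IsProbabilityMeasure ρ'] [IsProbabilityMeasure ρ''] :
    dPiDeltaPi Pol ρ ρ'' ≤ dPiDeltaPi Pol ρ ρ' + dPiDeltaPi Pol ρ' ρ'' := by
  refine Real.iSup_le (fun ⟨⟨π₁, h₁⟩, ⟨π₂, h₂⟩⟩ => ?_)
    (add_nonneg (dPiDeltaPi_nonneg _ _) (dPiDeltaPi_nonneg _ _))
  calc |avgTV ρ π₁ π₂ - avgTV ρ'' π₁ π₂|
      ≤ |avgTV ρ π₁ π₂ - avgTV ρ' π₁ π₂| + |avgTV ρ' π₁ π₂ - avgTV ρ'' π₁ π₂| :=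
        abs_sub_le _ _ _
    _ ≤ dPiDeltaPi Pol ρ ρ' + dPiDeltaPi Pol ρ' ρ'' :=
      add_le_add (abs_avgTV_sub_le_dPiDeltaPi hPol ρ ρ' h₁ h₂)
        (abs_avgTV_sub_le_dPiDeltaPi hPol ρ' ρ'' h₁ h₂)

lemma avgTV_le_source_add_dPiDeltaPi (hPol : ∀ π ∈ Pol, ∀ x g, IsProbabilityMeasure (π x g))
    {πG : X → G → Measure A} (hπG : ∀ x g, IsProbabilityMeasure (πG x g))
    (ρ ρ' : Measure (X × G)) [IsProbabilityMeasure ρ] [IsProbabilityMeasure ρ']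
    {π π' : X → G → Measure A} (hπ : π ∈ Pol) (hπ' : π' ∈ Pol)
    (I_ππ' : Integrable (fun p : X × G => tvDist (π p.1 p.2) (π' p.1 p.2)) ρ)
    (I_ππG : Integrable (fun p : X × G => tvDist (π p.1 p.2) (πG p.1 p.2)) ρ)
    (I_πGπ' : Integrable (fun p : X × G => tvDist (πG p.1 p.2) (π' p.1 p.2)) ρ)
    (I'_ππG : Integrable (fun p : X × G => tvDist (π p.1 p.2) (πG p.1 p.2)) ρ')
    (I'_ππ' : Integrable (fun p : X × G => tvDist (π p.1 p.2) (π' p.1 p.2)) ρ')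
    (I'_π'πG : Integrable (fun p : X × G => tvDist (π' p.1 p.2) (πG p.1 p.2)) ρ') :
    avgTV ρ' π πG ≤ avgTV ρ π πG + dPiDeltaPi Pol ρ ρ' + (avgTV ρ π' πG + avgTV ρ' π' πG) := by
  have hfin : ∀ σ ∈ Pol, ∀ x g, IsFiniteMeasure (σ x g) := fun σ hσ x g => by
    have := hPol σ hσ x g; infer_instance
  have hGfin : ∀ x g, IsFiniteMeasure (πG x g) := fun x g => by
    have := hπG x g; infer_instance
  have h_target : avgTV ρ' π πG ≤ avgTV ρ' π π' + avgTV ρ' π' πG :=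
    avgTV_triangle ρ' (hfin π hπ) (hfin π' hπ') hGfin I'_ππG I'_ππ' I'_π'πG
  have h_shift : avgTV ρ' π π' ≤ avgTV ρ π π' + dPiDeltaPi Pol ρ ρ' := by
    linarith [(abs_le.1 (abs_avgTV_sub_le_dPiDeltaPi hPol ρ ρ' hπ hπ')).1]
  have h_source : avgTV ρ π π' ≤ avgTV ρ π πG + avgTV ρ πG π' :=
    avgTV_triangle ρ (hfin π hπ) hGfin (hfin π' hπ') I_ππ' I_ππG I_πGπ'
  rw [avgTV_comm ρ πG π'] at h_source
  linarith

end PolicyDivergence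

lemma le_sum_mul_of_le {ι : Type*} (s : Finset ι) {w b : ι → ℝ} {a : ℝ}
    (hw : ∀ i ∈ s, 0 ≤ w i) (hw₁ : ∑ i ∈ s, w i = 1) (hab : ∀ i ∈ s, a ≤ b i) :
    a ≤ ∑ i ∈ s, w i * b i :=
  calc a = ∑ i ∈ s, w i * a := by rw [← Finset.sum_mul, hw₁, one_mul]
    _ ≤ ∑ i ∈ s, w i * b i :=
      Finset.sum_le_sum fun i hi => mul_le_mul_of_nonneg_left (hab i hi) (hw i hi)

theorem domain_generalization_bound_general {X G A : Type*} [MeasurableSpace X] [MeasurableSpace G]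
    [MeasurableSpace A] {N : ℕ}
    (Pol : Set (X → G → Measure A))
    (hPol : ∀ π' ∈ Pol, ∀ x g, IsProbabilityMeasure (π' x g))
    (πG : X → G → Measure A) (hπG : ∀ x g, IsProbabilityMeasure (πG x g))
    (ρs : Fin N → Measure (X × G)) (hρs : ∀ i, IsProbabilityMeasure (ρs i))
    (ρt : Measure (X × G)) [IsProbabilityMeasure ρt]
    (α : Fin N → ℝ) (hα_nonneg : ∀ i, 0 ≤ α i) (hα_sum : ∑ i, α i = 1)
    (δE : ℝ)
    (πstar : X → G → Measure A) (hπstar : πstar ∈ Pol)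
    -- ρ̃ lies in the characteristic set B(δ_E, E|Π) and minimizes the divergence to ρ^t
    (ρtil : Measure (X × G)) [IsProbabilityMeasure ρtil]
    (hρtil_mem : ∀ i, dPiDeltaPi Pol ρtil (ρs i) ≤ δE)
    -- all relevant expectations are assumed finite
    (hInt : ∀ π₁ ∈ insert πG Pol, ∀ π₂ ∈ insert πG Pol,
      (∀ i, Integrable (fun p : X × G => tvDist (π₁ p.1 p.2) (π₂ p.1 p.2)) (ρs i)) ∧
      Integrable (fun p : X × G => tvDist (π₁ p.1 p.2) (π₂ p.1 p.2)) ρt ∧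
      Integrable (fun p : X × G => tvDist (π₁ p.1 p.2) (π₂ p.1 p.2)) ρtil)
    (π : X → G → Measure A) (hπ : π ∈ Pol) :
    avgTV ρt π πG ≤ (∑ i, α i * avgTV (ρs i) π πG) +
      ((∑ i, α i * avgTV (ρs i) πstar πG) + avgTV ρt πstar πG) +
      δE + dPiDeltaPi Pol ρtil ρt := by
  have hmem : ∀ σ ∈ Pol, σ ∈ insert πG Pol := fun σ => Set.mem_insert_of_mem πG
  have hG : πG ∈ insert πG Pol := Set.mem_insert πG Pol
  obtain ⟨Is_ππ', It_ππ', -⟩ := hInt π (hmem π hπ) πstar (hmem πstar hπstar)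
  obtain ⟨Is_ππG, It_ππG, -⟩ := hInt π (hmem π hπ) πG hG
  obtain ⟨Is_πGπ', -, -⟩ := hInt πG hG πstar (hmem πstar hπstar)
  obtain ⟨-, It_π'πG, -⟩ := hInt πstar (hmem πstar hπstar) πG hG
  have hsource : ∀ i, avgTV ρt π πG ≤ avgTV (ρs i) π πG + (δE + dPiDeltaPi Pol ρtil ρt) +
      (avgTV (ρs i) πstar πG + avgTV ρt πstar πG) := by
    intro i
    have := hρs i
    have hdiv : dPiDeltaPi Pol (ρs i) ρt ≤ δE + dPiDeltaPi Pol ρtil ρt :=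
      calc dPiDeltaPi Pol (ρs i) ρt
          ≤ dPiDeltaPi Pol (ρs i) ρtil + dPiDeltaPi Pol ρtil ρt := dPiDeltaPi_triangle hPol _ _ _
        _ ≤ δE + dPiDeltaPi Pol ρtil ρt := by rw [dPiDeltaPi_comm]; gcongr; exact hρtil_mem i
    have := avgTV_le_source_add_dPiDeltaPi hPol hπG (ρs i) ρt hπ hπstar (Is_ππ' i) (Is_ππG i) (Is_πGπ' i)
      It_ππG It_ππ' It_π'πG
    linarith
  have havg := le_sum_mul_of_le Finset.univ (fun i _ => hα_nonneg i) hα_sum fun i _ => hsource i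
  simp only [mul_add, Finset.sum_add_distrib, ← Finset.sum_mul, hα_sum, one_mul] at havg
  linarith

/-- domain generalization bound. For every `π ∈ Π` and unit-sum weights `α`:
`ε^t(π‖π_G) ≤ Σᵢ αᵢ ε^{e_i}(π‖π_G) + λ_α + δ_E + d_{ΠΔΠ}(ρ̃, ρ^t)`, where `λ_α` is the
weighted joint optimal error (attained by `πstar ∈ Π`), `δ_E` the maximal pairwise
ΠΔΠ-divergence between sources, and `ρ̃` an element of the characteristic set
`B(δ_E, E|Π)` minimizing the ΠΔΠ-divergence to `ρ^t`. -/
theorem domain_generalization_bound {X G A : Type*} [MeasurableSpace X] [MeasurableSpace G]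
    [MeasurableSpace A] {N : ℕ}
    (Pol : Set (X → G → Measure A))
    (hPol : ∀ π' ∈ Pol, ∀ x g, IsProbabilityMeasure (π' x g))
    (πG : X → G → Measure A) (hπG : ∀ x g, IsProbabilityMeasure (πG x g))
    (ρs : Fin N → Measure (X × G)) (hρs : ∀ i, IsProbabilityMeasure (ρs i))
    (ρt : Measure (X × G)) [IsProbabilityMeasure ρt]
    (α : Fin N → ℝ) (hα_nonneg : ∀ i, 0 ≤ α i) (hα_sum : ∑ i, α i = 1)
    -- δ_E : maximal pairwise divergence among sources
    (δE : ℝ) (hδE : δE = ⨆ i : Fin N, ⨆ j : Fin N, dPiDeltaPi Pol (ρs i) (ρs j))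
    -- πstar attains λ_α over Π
    (πstar : X → G → Measure A) (hπstar : πstar ∈ Pol)
    (hmin : ∀ π' ∈ Pol,
      (∑ i, α i * avgTV (ρs i) πstar πG) + avgTV ρt πstar πG ≤
        (∑ i, α i * avgTV (ρs i) π' πG) + avgTV ρt π' πG)
    -- ρ̃ lies in the characteristic set B(δ_E, E|Π) and minimizes the divergence to ρ^t
    (ρtil : Measure (X × G)) [IsProbabilityMeasure ρtil]
    (hρtil_mem : ∀ i, dPiDeltaPi Pol ρtil (ρs i) ≤ δE)
    (hρtil_min : ∀ ρ' : Measure (X × G),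
      (∀ i, dPiDeltaPi Pol ρ' (ρs i) ≤ δE) → IsProbabilityMeasure ρ' →
        dPiDeltaPi Pol ρtil ρt ≤ dPiDeltaPi Pol ρ' ρt)
    -- all relevant expectations are assumed finite
    (hInt : ∀ π₁ ∈ insert πG Pol, ∀ π₂ ∈ insert πG Pol,
      (∀ i, Integrable (fun p : X × G => tvDist (π₁ p.1 p.2) (π₂ p.1 p.2)) (ρs i)) ∧
      Integrable (fun p : X × G => tvDist (π₁ p.1 p.2) (π₂ p.1 p.2)) ρt ∧
      Integrable (fun p : X × G => tvDist (π₁ p.1 p.2) (π₂ p.1 p.2)) ρtil)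
    (π : X → G → Measure A) (hπ : π ∈ Pol) :
    avgTV ρt π πG ≤ (∑ i, α i * avgTV (ρs i) π πG) +
      ((∑ i, α i * avgTV (ρs i) πstar πG) + avgTV ρt πstar πG) +
      δE + dPiDeltaPi Pol ρtil ρt :=
  domain_generalization_bound_general Pol hPol πG hπG ρs hρs ρt α hα_nonneg hα_sum δE πstar hπstar
    ρtil hρtil_mem hInt π hπ
end
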